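/- Fix λ ∈ k. Define the one-step rewriting relation →_Π on V = 𝔖(Z) →₀ k (the rewriting system of the differential operator identity of weight λ, ⌊xy⌋ = ⌊x⌋y + x⌊y⌋ + λ⌊x⌋⌊y⌋): f →_Π g iff there exist a context q and nonempty bracketed words u, v such that the word t := q[⌊u ++ v⌋] lies in supp(f) and g = f − f(t)·δ_t + f(t)·( δ_{q[⌊u⌋ ++ v]} + δ_{q[u ++ ⌊v⌋]} + λ·δ_{q[⌊u⌋ ++ ⌊v⌋]} ). Then →_Π is convergent (terminating and confluent). -/

import Mathlib

/-- Bracketed letters on `Z`: either a generator, or the letter `⌊w⌋` obtained by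
applying the formal operator `⌊ ⌋` to a nonempty word `w = h :: t`. -/
inductive BLtr (Z : Type*) where
  | of : Z → BLtr Z
  | flr : BLtr Z → List (BLtr Z) → BLtr Z

/-- Bracketed words on `Z`: nonempty lists of bracketed letters. -/
def BWord (Z : Type*) := {l : List (BLtr Z) // l ≠ []}

/-- Concatenation of bracketed words. -/
def BWord.cat {Z : Type*} (u v : BWord Z) : BWord Z :=
  ⟨u.1 ++ v.1, by
    intro h
    rcases List.append_eq_nil_iff.mp h with ⟨h1, _⟩
    exact u.2 h1⟩

/-- `⌊w⌋`: the one-letter word obtained by applying the formal operator to `w`. -/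
def BWord.flr {Z : Type*} (w : BWord Z) : BWord Z :=
  ⟨[BLtr.flr (w.1.head w.2) w.1.tail], by simp⟩

/-- Contexts (`⋆`-words) on `Z`. -/
inductive Ctx (Z : Type*) where
  | base : List (BLtr Z) → List (BLtr Z) → Ctx Z
  | deep : List (BLtr Z) → List (BLtr Z) → Ctx Z → Ctx Z

/-- Substitution of a bracketed word into a context. -/
def Ctx.subst {Z : Type*} : Ctx Z → BWord Z → BWord Z
  | .base l r, u => ⟨l ++ u.1 ++ r, by
      intro h
      rcases List.append_eq_nil_iff.mp h with ⟨h1, _⟩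
      rcases List.append_eq_nil_iff.mp h1 with ⟨_, h2⟩
      exact u.2 h2⟩
  | .deep l r q, u => ⟨l ++ (BWord.flr (q.subst u)).1 ++ r, by
      intro h
      rcases List.append_eq_nil_iff.mp h with ⟨h1, _⟩
      rcases List.append_eq_nil_iff.mp h1 with ⟨_, h2⟩
      exact (BWord.flr (q.subst u)).2 h2⟩

/-- Termination of a binary relation: no infinite chain of one-step rewritings. -/
def RelTerminating {V : Type*} (r : V → V → Prop) : Prop :=
  ¬ ∃ f : ℕ → V, ∀ n, r (f n) (f (n + 1))

/-- Confluence of a binary relation. -/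
def RelConfluent {V : Type*} (r : V → V → Prop) : Prop :=
  ∀ f g₁ g₂ : V, Relation.ReflTransGen r f g₁ → Relation.ReflTransGen r f g₂ →
    ∃ h, Relation.ReflTransGen r g₁ h ∧ Relation.ReflTransGen r g₂ h

/-- One-step rewriting relation of the differential identity of weight `λ`:
`⌊xy⌋ = ⌊x⌋y + x⌊y⌋ + λ⌊x⌋⌊y⌋`. -/
def DiffStep {Z k : Type*} [Field k] (lam : k) (f g : BWord Z →₀ k) : Prop :=
  ∃ (q : Ctx Z) (u v : BWord Z),
    f (q.subst (BWord.flr (u.cat v))) ≠ 0 ∧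
    g = f - Finsupp.single (q.subst (BWord.flr (u.cat v)))
              (f (q.subst (BWord.flr (u.cat v))))
        + f (q.subst (BWord.flr (u.cat v))) •
          (Finsupp.single (q.subst ((u.flr).cat v)) (1 : k)
            + Finsupp.single (q.subst (u.cat v.flr)) (1 : k)
            + lam • Finsupp.single (q.subst ((u.flr).cat v.flr)) (1 : k))

/-!
Termination: give a generator weight `1`, a letter `⌊w⌋` weight `3 ^ (weight of w)`, and a word the
sum of the weights of its letters. Since `3 ^ a + 3 ^ b < 3 ^ (a + b)` for `a, b ≥ 1`, each of the three
words replacing `q[⌊uv⌋]` in a step is lighter than it, so `∑_{w ∈ supp f} 4 ^ weight w` decreases.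

Confluence: the rewriting rule says that `⌊-⌋` behaves like a `λ`-weighted derivation. Interpreting a
word in the free algebra `k⟨letters⟩`, a generator as itself and `⌊w⌋` as the `λ`-derivation with
`a ↦ ⌊a⌋` applied to the interpretation of `w`, gives a linear map on `V` that is invariant under
every step and is the canonical embedding on the span of words all of whose letters are normal
(`z`, or `⌊a⌋` with `a` normal). An element outside that span admits a step, so by termination every
element rewrites to a normal one, and the invariant forces any two normal forms of `f` to agree.
-/

section AbstractRewriting

variable {V : Type*} {r : V → V → Prop}

theorem relTerminating_of_measure (μ : V → ℕ) (hμ : ∀ f g, r f g → μ g < μ f) :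
    RelTerminating r := by
  rintro ⟨f, hf⟩
  exact not_strictAnti_of_wellFoundedLT (μ ∘ f) (strictAnti_nat_of_succ_lt fun n ↦ hμ _ _ (hf n))

theorem exists_reflTransGen_of_measure (μ : V → ℕ) (hμ : ∀ f g, r f g → μ g < μ f)
    {P : V → Prop} (hP : ∀ f, ¬ P f → ∃ g, r f g) (f : V) :
    ∃ g, Relation.ReflTransGen r f g ∧ P g := by
  induction f using (measure μ).wf.induction with
  | _ f ih =>
    by_cases hf : P f
    · exact ⟨f, .refl, hf⟩
    · obtain ⟨g, hfg⟩ := hP f hf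
      obtain ⟨n, hgn, hn⟩ := ih g (hμ f g hfg)
      exact ⟨n, .head hfg hgn, hn⟩

theorem Relation.ReflTransGen.invariant {W : Type*} {N : V → W} (hN : ∀ f g, r f g → N g = N f)
    {f g : V} (h : Relation.ReflTransGen r f g) : N g = N f := by
  induction h with
  | refl => rfl
  | tail _ hstep ih => rw [hN _ _ hstep, ih]

theorem relConfluent_of_invariant {W : Type*} (N : V → W) (hN : ∀ f g, r f g → N g = N f)
    {P : V → Prop} (hsep : ∀ g g', P g → P g' → N g = N g' → g = g')
    (hnf : ∀ f, ∃ g, Relation.ReflTransGen r f g ∧ P g) : RelConfluent r := by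
  intro f g₁ g₂ h₁ h₂
  obtain ⟨n₁, hn₁, hP₁⟩ := hnf g₁
  obtain ⟨n₂, hn₂, hP₂⟩ := hnf g₂
  refine ⟨n₁, hn₁, ?_⟩
  convert hn₂ using 1
  refine hsep n₁ n₂ hP₁ hP₂ ?_
  rw [(h₁.trans hn₁).invariant hN, (h₂.trans hn₂).invariant hN]

end AbstractRewriting

section SupportWeight

variable {α M : Type*} (ω : α → ℕ)

def supportWeight [Zero M] (f : α →₀ M) : ℕ := ∑ a ∈ f.support, ω a

lemma supportWeight_add_le [AddZeroClass M] (f g : α →₀ M) :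
    supportWeight ω (f + g) ≤ supportWeight ω f + supportWeight ω g := by
  classical
  calc supportWeight ω (f + g) ≤ ∑ a ∈ f.support ∪ g.support, ω a :=
        Finset.sum_le_sum_of_subset Finsupp.support_add
    _ ≤ supportWeight ω f + supportWeight ω g := by
        rw [supportWeight, supportWeight, ← Finset.sum_union_inter]
        exact Nat.le_add_right _ _

lemma supportWeight_smul_le {R : Type*} [Zero M] [SMulZeroClass R M] (c : R) (f : α →₀ M) :
    supportWeight ω (c • f) ≤ supportWeight ω f :=
  Finset.sum_le_sum_of_subset Finsupp.support_smul

lemma supportWeight_single_le [Zero M] (a : α) (m : M) :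
    supportWeight ω (Finsupp.single a m) ≤ ω a :=
  (Finset.sum_le_sum_of_subset Finsupp.support_single_subset).trans_eq (Finset.sum_singleton ω a)

lemma supportWeight_erase_add [Zero M] {f : α →₀ M} {a : α} (ha : f a ≠ 0) :
    supportWeight ω (f.erase a) + ω a = supportWeight ω f := by
  classical
  rw [supportWeight, Finsupp.support_erase]
  exact Finset.sum_erase_add _ _ (Finsupp.mem_support_iff.mpr ha)

lemma supportWeight_sub_single_add_lt [AddGroup M] {f h : α →₀ M} {a : α} (ha : f a ≠ 0)
    (hh : supportWeight ω h < ω a) :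
    supportWeight ω (f - Finsupp.single a (f a) + h) < supportWeight ω f :=
  calc _ ≤ supportWeight ω (f.erase a) + supportWeight ω h := by
        rw [Finsupp.erase_eq_sub_single]
        exact supportWeight_add_le ω _ _
    _ < supportWeight ω (f.erase a) + ω a := by omega
    _ = supportWeight ω f := supportWeight_erase_add ω ha

end SupportWeight

lemma three_pow_add_three_pow_lt {a b : ℕ} (ha : 1 ≤ a) (hb : 1 ≤ b) :
    3 ^ a + 3 ^ b < 3 ^ (a + b) := by
  have h3a : 3 ≤ 3 ^ a := Nat.le_self_pow (by omega) 3
  have h3b : 3 ≤ 3 ^ b := Nat.le_self_pow (by omega) 3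
  rw [pow_add]
  nlinarith

lemma four_pow_add_four_pow_add_four_pow_lt {a b c m : ℕ} (ha : a < m) (hb : b < m) (hc : c < m) :
    4 ^ a + 4 ^ b + 4 ^ c < 4 ^ m := by
  have h (n : ℕ) (hn : n < m) : 4 * 4 ^ n ≤ 4 ^ m := by
    rw [← pow_succ']
    exact Nat.pow_le_pow_right (by norm_num) hn
  have := h a ha
  have := h b hb
  have := h c hc
  have := Nat.one_le_pow a 4 (by norm_num)
  omega

open scoped MonoidAlgebra

section WeightedDerivation

variable {R α : Type*} [CommRing R]

variable (R) in
noncomputable def listMonomial (l : List α) : R[FreeMonoid α] :=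
  MonoidAlgebra.of R _ (FreeMonoid.ofList l)

@[simp] lemma listMonomial_nil : listMonomial R ([] : List α) = 1 := map_one _

lemma listMonomial_append (l l' : List α) :
    listMonomial R (l ++ l') = listMonomial R l * listMonomial R l' := map_mul _ _ _

lemma listMonomial_cons (a : α) (l : List α) :
    listMonomial R (a :: l) = listMonomial R [a] * listMonomial R l :=
  listMonomial_append [a] l

noncomputable def derivList (lam : R) (δ : α → R[FreeMonoid α]) : List α → R[FreeMonoid α]
  | [] => 0
  | a :: t => δ a * listMonomial R t + listMonomial R [a] * derivList lam δ t
      + lam • (δ a * derivList lam δ t)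

lemma derivList_append (lam : R) (δ : α → R[FreeMonoid α]) (l l' : List α) :
    derivList lam δ (l ++ l') = derivList lam δ l * listMonomial R l'
      + listMonomial R l * derivList lam δ l' + lam • (derivList lam δ l * derivList lam δ l') := by
  induction l with
  | nil => simp [derivList]
  | cons a t ih =>
    simp only [List.cons_append, derivList, ih, listMonomial_append, listMonomial_cons (R := R) a t,
      mul_add, add_mul, mul_smul_comm, smul_mul_assoc, smul_add, smul_smul, mul_assoc]
    abel

noncomputable def weightedDeriv (lam : R) (δ : α → R[FreeMonoid α]) :
    R[FreeMonoid α] →ₗ[R] R[FreeMonoid α] :=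
  (MonoidAlgebra.basis (FreeMonoid α) R).constr R fun m ↦ derivList lam δ m.toList

lemma weightedDeriv_listMonomial (lam : R) (δ : α → R[FreeMonoid α]) (l : List α) :
    weightedDeriv lam δ (listMonomial R l) = derivList lam δ l := by
  rw [listMonomial, MonoidAlgebra.of_apply, ← MonoidAlgebra.basis_apply, weightedDeriv,
    Module.Basis.constr_basis, FreeMonoid.toList_ofList]

lemma single_eq_smul_listMonomial (m : FreeMonoid α) (c : R) :
    MonoidAlgebra.single m c = c • listMonomial R m.toList := by
  rw [listMonomial, MonoidAlgebra.smul_of, FreeMonoid.ofList_toList]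

theorem weightedDeriv_mul (lam : R) (δ : α → R[FreeMonoid α]) (x y : R[FreeMonoid α]) :
    weightedDeriv lam δ (x * y) = weightedDeriv lam δ x * y + x * weightedDeriv lam δ y
      + lam • (weightedDeriv lam δ x * weightedDeriv lam δ y) := by
  induction x using MonoidAlgebra.induction_linear with
  | zero => simp
  | add x x' hx hx' =>
    simp only [add_mul, map_add, hx, hx', smul_add]
    abel
  | single m c =>
    induction y using MonoidAlgebra.induction_linear with
    | zero => simp
    | add y y' hy hy' =>
      simp only [mul_add, map_add, hy, hy', smul_add]
      abel
    | single n d =>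
      simp only [single_eq_smul_listMonomial, ← listMonomial_append, map_smul,
        weightedDeriv_listMonomial, derivList_append, smul_add, smul_mul_assoc, mul_smul_comm,
        smul_smul]
      module

end WeightedDerivation

namespace BLtr

variable {Z k : Type*} [Field k] (lam : k)

noncomputable def floorDeriv : k[FreeMonoid (BLtr Z)] →ₗ[k] k[FreeMonoid (BLtr Z)] :=
  weightedDeriv lam fun a ↦ listMonomial k [BLtr.flr a []]

mutual
noncomputable def normalForm : BLtr Z → k[FreeMonoid (BLtr Z)]
  | .of z => listMonomial k [.of z]
  | .flr h t => floorDeriv lam (normalForm h * normalFormList t)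
noncomputable def normalFormList : List (BLtr Z) → k[FreeMonoid (BLtr Z)]
  | [] => 1
  | a :: t => normalForm a * normalFormList t
end

lemma normalFormList_append (l l' : List (BLtr Z)) :
    normalFormList lam (l ++ l') = normalFormList lam l * normalFormList lam l' := by
  induction l with
  | nil => simp [normalFormList]
  | cons a t ih => simp [normalFormList, ih, mul_assoc]

lemma normalFormList_flr (w : BWord Z) :
    normalFormList lam w.flr.1 = floorDeriv lam (normalFormList lam w.1) := by
  conv_rhs => rw [← List.cons_head_tail w.2]
  simp [BWord.flr, normalFormList, normalForm]

lemma normalFormList_cat (u v : BWord Z) :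
    normalFormList lam (u.cat v).1 = normalFormList lam u.1 * normalFormList lam v.1 :=
  normalFormList_append lam u.1 v.1

lemma normalFormList_flr_cat (u v : BWord Z) :
    normalFormList lam (u.cat v).flr.1 = normalFormList lam (u.flr.cat v).1
      + normalFormList lam (u.cat v.flr).1 + lam • normalFormList lam (u.flr.cat v.flr).1 := by
  simp only [normalFormList_flr, normalFormList_cat, floorDeriv, weightedDeriv_mul]

lemma normalFormList_subst_flr_cat (q : Ctx Z) (u v : BWord Z) :
    normalFormList lam (q.subst (u.cat v).flr).1 = normalFormList lam (q.subst (u.flr.cat v)).1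
      + normalFormList lam (q.subst (u.cat v.flr)).1
      + lam • normalFormList lam (q.subst (u.flr.cat v.flr)).1 := by
  induction q with
  | base l r =>
    simp only [Ctx.subst, normalFormList_append, normalFormList_flr_cat, mul_add, add_mul,
      mul_smul_comm, smul_mul_assoc]
  | deep l r q ih =>
    simp only [Ctx.subst, normalFormList_append, normalFormList_flr, ih, map_add, map_smul,
      mul_add, add_mul, mul_smul_comm, smul_mul_assoc]

inductive IsNormal : BLtr Z → Prop
  | of (z : Z) : IsNormal (.of z)
  | flr {a : BLtr Z} : IsNormal a → IsNormal (.flr a [])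

lemma normalForm_of_isNormal {a : BLtr Z} (ha : IsNormal a) :
    normalForm lam a = listMonomial k [a] := by
  induction ha with
  | of z => simp [normalForm]
  | flr _ ih =>
    simp [normalForm, normalFormList, ih, floorDeriv, weightedDeriv_listMonomial, derivList]

lemma normalFormList_of_forall_isNormal {l : List (BLtr Z)} (hl : ∀ a ∈ l, IsNormal a) :
    normalFormList lam l = listMonomial k l := by
  induction l with
  | nil => simp [normalFormList]
  | cons a t ih =>
    rw [normalFormList, normalForm_of_isNormal lam (hl a (by simp)),
      ih fun b hb ↦ hl b (by simp [hb]), ← listMonomial_cons]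

end BLtr

namespace Ctx

variable {Z : Type*}

lemma exists_subst_eq_append (q : Ctx Z) (s s' : List (BLtr Z)) :
    ∃ q' : Ctx Z, ∀ x, (q'.subst x).1 = s ++ (q.subst x).1 ++ s' := by
  cases q with
  | base l r => exact ⟨.base (s ++ l) (r ++ s'), fun x ↦ by simp [subst]⟩
  | deep l r q => exact ⟨.deep (s ++ l) (r ++ s') q, fun x ↦ by simp [subst]⟩

lemma exists_subst_eq_of_not_isNormal :
    ∀ a : BLtr Z, ¬ a.IsNormal → ∃ (q : Ctx Z) (u v : BWord Z), (q.subst (u.cat v).flr).1 = [a]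
  | .of z, ha => absurd (.of z) ha
  | .flr h [], ha => by
    obtain ⟨q, u, v, e⟩ := exists_subst_eq_of_not_isNormal h fun hh ↦ ha hh.flr
    refine ⟨.deep [] [] q, u, v, ?_⟩
    simp only [subst, List.nil_append, List.append_nil]
    generalize q.subst (u.cat v).flr = x at e ⊢
    obtain ⟨_, _⟩ := x
    subst e
    rfl
  | .flr h (b :: t), _ =>
    ⟨.base [] [], ⟨[h], by simp⟩, ⟨b :: t, by simp⟩, by simp [subst, BWord.flr, BWord.cat]⟩

lemma exists_subst_eq_of_mem {w : BWord Z} {a : BLtr Z} (ha : a ∈ w.1) (hna : ¬ a.IsNormal) :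
    ∃ (q : Ctx Z) (u v : BWord Z), q.subst (u.cat v).flr = w := by
  obtain ⟨s, s', hw⟩ := List.append_of_mem ha
  obtain ⟨q, u, v, e⟩ := exists_subst_eq_of_not_isNormal a hna
  obtain ⟨q', hq'⟩ := q.exists_subst_eq_append s s'
  exact ⟨q', u, v, Subtype.ext (by simp [hq', e, hw])⟩

end Ctx

namespace BLtr

variable {Z : Type*}

mutual
def weight : BLtr Z → ℕ
  | .of _ => 1
  | .flr h t => 3 ^ (weight h + listWeight t)
def listWeight : List (BLtr Z) → ℕ
  | [] => 0
  | a :: t => weight a + listWeight t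
end

lemma one_le_weight (a : BLtr Z) : 1 ≤ a.weight := by
  cases a with
  | of z => simp [weight]
  | flr h t => exact Nat.one_le_pow _ _ (by norm_num)

lemma listWeight_append (l l' : List (BLtr Z)) :
    listWeight (l ++ l') = listWeight l + listWeight l' := by
  induction l with
  | nil => simp [listWeight]
  | cons a t ih => simp [listWeight, ih, Nat.add_assoc]

lemma listWeight_cat (u v : BWord Z) :
    listWeight (u.cat v).1 = listWeight u.1 + listWeight v.1 :=
  listWeight_append u.1 v.1

lemma one_le_listWeight (w : BWord Z) : 1 ≤ listWeight w.1 := by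
  rw [← List.cons_head_tail w.2, listWeight]
  have := one_le_weight (w.1.head w.2)
  omega

lemma listWeight_flr (w : BWord Z) : listWeight w.flr.1 = 3 ^ listWeight w.1 := by
  conv_rhs => rw [← List.cons_head_tail w.2]
  simp [BWord.flr, listWeight, weight]

lemma listWeight_subst_lt (q : Ctx Z) {x y : BWord Z} (h : listWeight x.1 < listWeight y.1) :
    listWeight (q.subst x).1 < listWeight (q.subst y).1 := by
  induction q with
  | base l r =>
    simp only [Ctx.subst, listWeight_append]
    omega
  | deep l r q ih =>
    simp only [Ctx.subst, listWeight_append, listWeight_flr]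
    have := Nat.pow_lt_pow_right (by norm_num : 1 < 3) ih
    omega

lemma listWeight_subst_lt_flr_cat (q : Ctx Z) (u v : BWord Z) :
    listWeight (q.subst (u.flr.cat v)).1 < listWeight (q.subst (u.cat v).flr).1 ∧
    listWeight (q.subst (u.cat v.flr)).1 < listWeight (q.subst (u.cat v).flr).1 ∧
    listWeight (q.subst (u.flr.cat v.flr)).1 < listWeight (q.subst (u.cat v).flr).1 := by
  have hu := one_le_listWeight u
  have hv := one_le_listWeight v
  have key := three_pow_add_three_pow_lt hu hv
  have := Nat.lt_pow_self (n := listWeight u.1) (by norm_num : 1 < 3)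
  have := Nat.lt_pow_self (n := listWeight v.1) (by norm_num : 1 < 3)
  refine ⟨listWeight_subst_lt q ?_, listWeight_subst_lt q ?_, listWeight_subst_lt q ?_⟩ <;>
    simp only [listWeight_cat, listWeight_flr] <;> omega

end BLtr

namespace DiffStep

variable {Z k : Type*} [Field k] (lam : k)

/-- Base `4` because a step replaces one word by at most three words of smaller `listWeight`. -/
def wordWeight (w : BWord Z) : ℕ := 4 ^ BLtr.listWeight w.1

theorem supportWeight_lt {f g : BWord Z →₀ k} (h : DiffStep lam f g) :
    supportWeight wordWeight g < supportWeight wordWeight f := by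
  obtain ⟨q, u, v, hne, rfl⟩ := h
  obtain ⟨h₁, h₂, h₃⟩ := BLtr.listWeight_subst_lt_flr_cat q u v
  refine supportWeight_sub_single_add_lt _ hne ?_
  calc _ ≤ supportWeight wordWeight (Finsupp.single (q.subst (u.flr.cat v)) (1 : k)
          + Finsupp.single (q.subst (u.cat v.flr)) 1
          + lam • Finsupp.single (q.subst (u.flr.cat v.flr)) 1) := supportWeight_smul_le _ _ _
    _ ≤ wordWeight (q.subst (u.flr.cat v)) + wordWeight (q.subst (u.cat v.flr))
          + wordWeight (q.subst (u.flr.cat v.flr)) :=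
      (supportWeight_add_le _ _ _).trans <| add_le_add
        ((supportWeight_add_le _ _ _).trans (add_le_add (supportWeight_single_le _ _ _)
          (supportWeight_single_le _ _ _)))
        ((supportWeight_smul_le _ _ _).trans (supportWeight_single_le _ _ _))
    _ < wordWeight (q.subst (u.cat v).flr) := four_pow_add_four_pow_add_four_pow_lt h₁ h₂ h₃

variable (Z k) in
noncomputable def toFreeMonoidAlgebra : (BWord Z →₀ k) →ₗ[k] k[FreeMonoid (BLtr Z)] :=
  Finsupp.linearCombination k fun w ↦ listMonomial k w.1

lemma toFreeMonoidAlgebra_injective : Function.Injective (toFreeMonoidAlgebra Z k) := by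
  have hli := (MonoidAlgebra.basis (FreeMonoid (BLtr Z)) k).linearIndependent.comp
    (fun w : BWord Z ↦ FreeMonoid.ofList w.1) (FreeMonoid.ofList.injective.comp Subtype.val_injective)
  have hv : (MonoidAlgebra.basis (FreeMonoid (BLtr Z)) k ∘ fun w : BWord Z ↦ FreeMonoid.ofList w.1)
      = fun w ↦ listMonomial k w.1 := by
    ext1 w
    simp [listMonomial]
  rw [hv] at hli
  exact hli

noncomputable def normalForm : (BWord Z →₀ k) →ₗ[k] k[FreeMonoid (BLtr Z)] :=
  Finsupp.linearCombination k fun w ↦ BLtr.normalFormList lam w.1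

theorem normalForm_eq {f g : BWord Z →₀ k} (h : DiffStep lam f g) :
    normalForm lam g = normalForm lam f := by
  obtain ⟨q, u, v, -, rfl⟩ := h
  simp only [normalForm, map_add, map_sub, map_smul, Finsupp.linearCombination_single,
    BLtr.normalFormList_subst_flr_cat]
  module

def IsNormal (f : BWord Z →₀ k) : Prop := ∀ w ∈ f.support, ∀ a ∈ w.1, BLtr.IsNormal a

lemma normalForm_of_isNormal {f : BWord Z →₀ k} (hf : IsNormal f) :
    normalForm lam f = toFreeMonoidAlgebra Z k f := by
  simp only [normalForm, toFreeMonoidAlgebra, Finsupp.linearCombination_apply]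
  exact Finsupp.sum_congr fun w hw ↦ by
    rw [BLtr.normalFormList_of_forall_isNormal lam (hf w hw)]

lemma exists_of_not_isNormal {f : BWord Z →₀ k} (hf : ¬ IsNormal f) : ∃ g, DiffStep lam f g := by
  simp only [IsNormal, not_forall] at hf
  obtain ⟨w, hw, a, ha, hna⟩ := hf
  obtain ⟨q, u, v, e⟩ := Ctx.exists_subst_eq_of_mem ha hna
  exact ⟨_, q, u, v, e ▸ Finsupp.mem_support_iff.mp hw, rfl⟩

end DiffStep

/-- The rewriting system of the differential operator identity of weight `λ` is
convergent: terminating and confluent. -/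
theorem differential_rewriting_convergent {Z k : Type*} [Field k] (lam : k) :
    RelTerminating (DiffStep (Z := Z) (k := k) lam) ∧
      RelConfluent (DiffStep (Z := Z) (k := k) lam) := by
  have hμ : ∀ f g : BWord Z →₀ k, DiffStep lam f g →
      supportWeight DiffStep.wordWeight g < supportWeight DiffStep.wordWeight f :=
    fun _ _ h ↦ h.supportWeight_lt
  refine ⟨relTerminating_of_measure _ hμ,
    relConfluent_of_invariant (DiffStep.normalForm lam) (fun _ _ h ↦ h.normalForm_eq)
      (P := DiffStep.IsNormal) ?_
      (exists_reflTransGen_of_measure _ hμ fun _ hf ↦ DiffStep.exists_of_not_isNormal lam hf)⟩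
  intro g g' hg hg' h
  apply DiffStep.toFreeMonoidAlgebra_injective
  rwa [← DiffStep.normalForm_of_isNormal lam hg, ← DiffStep.normalForm_of_isNormal lam hg']
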